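/- For every integer m ≥ 1, det(5·I_m + V_m) ≥ 5^{m/3}; equivalently, the normalized determinant (det(5·I_m + V_m))^{1/m} is at least 5^{1/3}. -/
import Mathlib


/-- `V m` is the `m × m` real symmetric matrix with entries `2` on the
sub- and super-diagonal and `0` otherwise (twice the adjacency matrix of
the path graph on `m` vertices). -/
def V (m : ℕ) : Matrix (Fin m) (Fin m) ℝ := fun i j =>
  if (i : ℕ) + 1 = (j : ℕ) ∨ (j : ℕ) + 1 = (i : ℕ) then 2 else 0


noncomputable def A (m : ℕ) : Matrix (Fin m) (Fin m) ℝ :=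
  (5 : ℝ) • (1 : Matrix (Fin m) (Fin m) ℝ) + V m

lemma A_apply (m : ℕ) (i j : Fin m) :
    A m i j = (if i = j then 5 else 0) +
      (if (i : ℕ) + 1 = (j : ℕ) ∨ (j : ℕ) + 1 = (i : ℕ) then 2 else 0) := by
  simp [A, V, Matrix.add_apply, Matrix.one_apply, mul_ite]

lemma A_ext {m k : ℕ} (i j : Fin m) (i' j' : Fin k) (c : ℕ)
    (hi : (i' : ℕ) = (i : ℕ) + c) (hj : (j' : ℕ) = (j : ℕ) + c) :
    A k i' j' = A m i j := by
  rw [A_apply, A_apply]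
  simp only [Fin.ext_iff, hi, hj]
  congr 1
  · exact if_congr (by omega) rfl rfl
  · exact if_congr (by omega) rfl rfl

lemma A_rec (m : ℕ) : (A (m+2)).det = 5 * (A (m+1)).det - 4 * (A m).det := by
  rw [Matrix.det_succ_row_zero, Fin.sum_univ_succ, Fin.sum_univ_succ]
  have h0 : A (m+2) 0 0 = 5 := by simp [A_apply]
  have h1 : A (m+2) 0 (Fin.succ 0) = 2 := by simp [A_apply, Fin.ext_iff]
  have hz : ∀ j : Fin m, A (m+2) 0 j.succ.succ = 0 := by
    intro j
    rw [A_apply]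
    simp [Fin.ext_iff, Fin.val_succ]
  rw [h0, h1]
  simp only [hz, mul_zero, zero_mul, Finset.sum_const_zero, add_zero]
  have hS0 : (A (m+2)).submatrix Fin.succ (Fin.succAbove 0) = A (m+1) := by
    ext i j
    rw [Matrix.submatrix_apply, Fin.succAbove_zero]
    exact A_ext i j _ _ 1 (Fin.val_succ i) (Fin.val_succ j)
  have hv0 : ((Fin.succ 0 : Fin (m+2)).succAbove 0 : ℕ) = 0 := by
    simp [Fin.succAbove]
  have hS1 : ((A (m+2)).submatrix Fin.succ (Fin.succ 0).succAbove).det = 2 * (A m).det := by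
    set S1 := (A (m+2)).submatrix Fin.succ (Fin.succ 0).succAbove with hS1def
    rw [Matrix.det_succ_column_zero, Fin.sum_univ_succ]
    have hc0 : S1 0 0 = 2 := by
      simp [hS1def, Matrix.submatrix_apply, A_apply, Fin.succAbove, Fin.ext_iff]
    have hcz : ∀ i : Fin m, S1 i.succ 0 = 0 := by
      intro i
      rw [hS1def, Matrix.submatrix_apply, A_apply, if_neg, if_neg]
      · norm_num
      · rw [Fin.val_succ, Fin.val_succ, hv0]; omega
      · rw [Fin.ext_iff, Fin.val_succ, Fin.val_succ, hv0]; omega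
    rw [hc0]
    simp only [hcz, mul_zero, zero_mul, Finset.sum_const_zero, add_zero]
    have hsub : S1.submatrix Fin.succ Fin.succ = A m := by
      ext i j
      rw [hS1def, Matrix.submatrix_apply, Matrix.submatrix_apply]
      refine A_ext i j _ _ 2 ?_ ?_
      · rw [Fin.val_succ, Fin.val_succ]
      · have : ((Fin.succ 0 : Fin (m+2)).succAbove j.succ : ℕ) = (j : ℕ) + 2 := by
          simp [Fin.succAbove, Fin.lt_def, Fin.val_succ]
        rw [this]
    rw [Fin.succAbove_zero, hsub]
    norm_num
  rw [hS0, hS1]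
  simp [Fin.val_succ]
  ring

lemma A_det_aux : ∀ m : ℕ, (A m).det = ((4:ℝ)^(m+1) - 1)/3 ∧
    (A (m+1)).det = ((4:ℝ)^(m+2) - 1)/3 := by
  intro m
  induction m with
  | zero =>
    constructor
    · rw [Matrix.det_fin_zero]; norm_num
    · rw [Matrix.det_fin_one, A_apply]; norm_num
  | succ n ih =>
    refine ⟨ih.2, ?_⟩
    rw [A_rec, ih.1, ih.2]
    ring

/-- `det (5·I + V m) ≥ 5 ^ (m/3)`; equivalently the normalized determinant
`(det (5·I + V m)) ^ (1/m)` is at least `5 ^ (1/3)`. -/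
theorem det_shifted_V_ge (m : ℕ) (hm : 1 ≤ m) :
    ((5 : ℝ) • (1 : Matrix (Fin m) (Fin m) ℝ) + V m).det ≥
      (5 : ℝ) ^ ((m : ℝ) / 3) := by
  have hdet : ((5 : ℝ) • (1 : Matrix (Fin m) (Fin m) ℝ) + V m).det
      = ((4:ℝ)^(m+1) - 1)/3 := (A_det_aux m).1
  rw [hdet]
  have hcube : (5:ℝ) ^ ((m:ℝ)/3) ≤ (4:ℝ)^m := by
    have h1 : (5:ℝ) ^ ((m:ℝ)/3) = ((5:ℝ)^((1:ℝ)/3))^(m:ℕ) := by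
      rw [← Real.rpow_natCast ((5:ℝ)^((1:ℝ)/3)) m, ← Real.rpow_mul (by norm_num)]
      ring_nf
    rw [h1]
    apply pow_le_pow_left₀ (Real.rpow_nonneg (by norm_num) _)
    have h2 : (5:ℝ)^((1:ℝ)/3) ≤ (64:ℝ)^((1:ℝ)/3) :=
      Real.rpow_le_rpow (by norm_num) (by norm_num) (by norm_num)
    have h3 : (64:ℝ)^((1:ℝ)/3) = 4 := by
      rw [show (64:ℝ) = (4:ℝ)^(3:ℕ) by norm_num, ← Real.rpow_natCast (4:ℝ) 3,
        ← Real.rpow_mul (by norm_num)]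
      norm_num
    linarith
  have h4 : (1:ℝ) ≤ (4:ℝ)^m := one_le_pow₀ (by norm_num)
  have h5 : (4:ℝ)^(m+1) = 4 * (4:ℝ)^m := by rw [pow_succ]; ring
  linarith
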